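/- Let R be a commutative ring with finitely many minimal primes, and x a parameter sequence on R. Then ht((x)R) ≥ ℓ(x), the length of the sequence. -/

import Mathlib

/-- The natural map between localizations of a module at powers of two elements
`a ∣ b`, sending `m/1` to `m/1`. -/

noncomputable def cechLoc {R : Type*} [CommRing R] {M : Type*} [AddCommGroup M] [Module R M]
    (a b : R) (hab : a ∣ b) :
    LocalizedModule (Submonoid.powers a) M →ₗ[R] LocalizedModule (Submonoid.powers b) M :=
  LocalizedModule.lift _ (LocalizedModule.mkLinearMap (Submonoid.powers b) M) (by
    rintro ⟨s, n, rfl⟩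
    obtain ⟨c, rfl⟩ := hab
    set f := algebraMap R (Module.End R (LocalizedModule (Submonoid.powers (a * c)) M)) with hf
    obtain ⟨u, hu⟩ := IsLocalizedModule.map_units
      (LocalizedModule.mkLinearMap (Submonoid.powers (a * c)) M)
      (⟨(a * c) ^ n, n, rfl⟩ : Submonoid.powers (a * c))
    have hcomm : Commute (f (a ^ n)) ↑u := by
      have : Commute (f (a ^ n)) (f ((a * c) ^ n)) := by
        simp only [Commute, SemiconjBy, ← map_mul, mul_comm]
      rwa [← hu] at this
    refine ⟨⟨f (a ^ n), f (c ^ n) * ↑u⁻¹, ?_, ?_⟩, rfl⟩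
    · rw [← mul_assoc, ← map_mul, ← mul_pow, ← hu]
      exact u.mul_inv
    · rw [mul_assoc, ← (hcomm.units_inv_right).eq, ← mul_assoc, ← map_mul]
      have : c ^ n * a ^ n = (a * c) ^ n := by ring
      rw [this, ← hu]
      exact u.mul_inv)

open scoped BigOperators
open Classical

noncomputable section

variable {R : Type*} [CommRing R]

/-- Degree `i` term of the Čech complex of the sequence `x` with coefficients in `M`:
the product over `i`-element subsets `t` of the index set of the localization of `M`
at the product of the `x j` for `j ∈ t`. -/
noncomputable abbrev CechC {ℓ : ℕ} (x : Fin ℓ → R) (M : Type*) [AddCommGroup M] [Module R M]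
    (i : ℕ) : Type _ :=
  ∀ t : {t : Finset (Fin ℓ) // t.card = i}, LocalizedModule (Submonoid.powers (∏ j ∈ t.1, x j)) M

/-- The Čech differential `C^i → C^{i+1}`: the alternating sum of the further-localization
maps. -/
noncomputable def cechD {ℓ : ℕ} (x : Fin ℓ → R) (M : Type*) [AddCommGroup M] [Module R M]
    (i : ℕ) : CechC x M i →ₗ[R] CechC x M (i + 1) where
  toFun m t := ∑ j ∈ (t.1).attach,
    ((-1 : ℤ) ^ ((t.1.filter (· < j.1)).card)) •
      cechLoc (∏ k ∈ t.1.erase j.1, x k) (∏ k ∈ t.1, x k)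
        (Finset.prod_dvd_prod_of_subset _ _ _ (Finset.erase_subset _ _))
        (m ⟨t.1.erase j.1, by rw [Finset.card_erase_of_mem j.2, t.2]; omega⟩)
  map_add' := by
    intro a b
    funext t
    simp [Pi.add_apply, map_add, smul_add, Finset.sum_add_distrib]
    rw [← Finset.sum_add_distrib]
    refine Finset.sum_congr rfl (fun _ _ => ?_)
    first
      | exact zsmul_add _ _ _
      | exact smul_add (M := ℤ) _ _ _
      | erw [smul_add]
  map_smul' := by
    intro r a
    funext t
    simp [Pi.smul_apply, map_smul, Finset.smul_sum, smul_comm r]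

/-- The submodule of Čech coboundaries in degree `i`. -/
noncomputable def cechPrevRange {ℓ : ℕ} (x : Fin ℓ → R) (M : Type*) [AddCommGroup M]
    [Module R M] : (i : ℕ) → Submodule R (CechC x M i)
  | 0 => ⊥
  | (i + 1) => LinearMap.range (cechD x M i)

/-- The `i`-th Čech cohomology of `M` with respect to the sequence `x`:
cocycles modulo coboundaries. -/
noncomputable abbrev CechH {ℓ : ℕ} (x : Fin ℓ → R) (M : Type*) [AddCommGroup M] [Module R M]
    (i : ℕ) : Type _ :=
  LinearMap.ker (cechD x M i) ⧸
    (cechPrevRange x M i).comap (LinearMap.ker (cechD x M i)).subtype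


/-- Degree `i` term of the Koszul complex on `ℓ` elements: free module indexed by
`i`-element subsets of the index set. -/
abbrev KoszulC (R : Type*) [CommRing R] (ℓ i : ℕ) : Type _ :=
  {t : Finset (Fin ℓ) // t.card = i} → R

/-- The Koszul differential `K_{i+1} → K_i` for the sequence `x^k = x_1^k, ..., x_ℓ^k`. -/
noncomputable def koszulD {ℓ : ℕ} (x : Fin ℓ → R) (k : ℕ) (i : ℕ) :
    KoszulC R ℓ (i + 1) →ₗ[R] KoszulC R ℓ i where
  toFun m s := ∑ j ∈ (s.1ᶜ).attach,
    ((-1 : ℤ) ^ ((s.1.filter (· < j.1)).card)) •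
      ((x j.1 ^ k) * m ⟨insert j.1 s.1, by
        rw [Finset.card_insert_of_notMem (Finset.mem_compl.mp j.2), s.2]⟩)
  map_add' := by
    intro a b
    funext s
    simp [mul_add, smul_add, Finset.sum_add_distrib]
  map_smul' := by
    intro r a
    funext s
    simp [Finset.mul_sum, mul_smul_comm, mul_left_comm]
  
/-- The standard transition chain map `K(x^m) → K(x^n)` (for `n ≤ m`) in degree `i`:
multiplication on the component indexed by `t` by `∏_{j ∈ t} x_j^{m-n}`. -/
noncomputable def koszulTr {ℓ : ℕ} (x : Fin ℓ → R) (m n i : ℕ) :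
    KoszulC R ℓ i →ₗ[R] KoszulC R ℓ i where
  toFun z t := (∏ j ∈ t.1, x j ^ (m - n)) * z t
  map_add' := by intro a b; funext t; simp [mul_add]
  map_smul' := by intro r a; funext t; simp; ring

/-- A finite sequence `x` is weakly proregular if for each `n` there is `m ≥ n` such that
the transition maps `H_i(x^m; R) → H_i(x^n; R)` on Koszul homology vanish for all `i ≥ 1`;
equivalently, the transition image of every cycle is a boundary. -/
def WeaklyProregular {ℓ : ℕ} (x : Fin ℓ → R) : Prop :=
  ∀ n : ℕ, 1 ≤ n → ∃ m, n ≤ m ∧ ∀ i : ℕ, ∀ z : KoszulC R ℓ (i + 1),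
    koszulD x m i z = 0 →
      ∃ b : KoszulC R ℓ (i + 1 + 1), koszulD x n (i + 1) b = koszulTr x m n (i + 1) z

/-- The height of an ideal: the infimum of the heights of the primes containing it. -/
noncomputable def idealHeight (I : Ideal R) : ℕ∞ :=
  ⨅ p : {p : PrimeSpectrum R // I ≤ p.asIdeal}, Order.height p.1


/-- A finite sequence `x` (given as a list `l`) is a parameter sequence on `R` if it is
weakly proregular, generates a proper ideal, and the localized top Čech cohomology
`H^{ℓ(x)}_x(R)_p` is nonzero for every prime `p` containing `(x)R`. -/
def IsParamSeq (l : List R) : Prop :=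
  WeaklyProregular l.get ∧ Ideal.span {a | a ∈ l} ≠ ⊤ ∧
    ∀ p : PrimeSpectrum R, Ideal.span {a | a ∈ l} ≤ p.asIdeal →
      Nontrivial (LocalizedModule p.asIdeal.primeCompl (CechH l.get R l.length))

/-- A strong parameter sequence: every initial segment is a parameter sequence. -/
def IsStrongParamSeq (l : List R) : Prop :=
  ∀ i : ℕ, i ≤ l.length → IsParamSeq (l.take i)

/-!
Localizing at a prime `p` of height `h` gives a ring of Krull dimension `h`. In a ring of
dimension `< n`, any `n` elements satisfy `(x₁ ⋯ xₙ) ^ T ∈ (x₁ ^ (T + 1), …, xₙ ^ (T + 1))` for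
some `T`: by induction on `n`, localizing at the Coquand–Lombardi boundary monoid
`xₙ ^ ℕ (1 + xₙ A)` lowers the dimension, because a prime missing it is never maximal. Such a
relation exhibits every top Čech cochain, after multiplication by some `s ∉ p`, as a coboundary,
so `H^ℓ_x(R)_p = 0` whenever `ht p < ℓ`; a parameter sequence forbids this for every `p ⊇ (x)`.
-/

section KrullBoundary

variable {A : Type*} [CommRing A]

def krullBoundary (x : A) : Submonoid A where
  carrier := {y | ∃ m a, y = x ^ m * (1 + a * x)}
  one_mem' := ⟨0, 0, by ring⟩
  mul_mem' := by
    rintro y z ⟨m, a, rfl⟩ ⟨m', a', rfl⟩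
    exact ⟨m + m', a + a' + a * a' * x, by ring⟩

lemma mem_krullBoundary_self (x : A) : x ∈ krullBoundary x := ⟨1, 0, by ring⟩

lemma exists_lt_of_disjoint_krullBoundary {x : A} {q : PrimeSpectrum A}
    (hq : Disjoint (krullBoundary x : Set A) q.asIdeal) : ∃ Q : PrimeSpectrum A, q < Q := by
  have hne : q.asIdeal ⊔ Ideal.span {x} ≠ ⊤ := by
    rw [Ne, Ideal.eq_top_iff_one]
    intro h
    obtain ⟨t, ht, z, hz, htz⟩ := Submodule.mem_sup.mp h
    obtain ⟨a, rfl⟩ := Ideal.mem_span_singleton'.mp hz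
    exact Set.disjoint_left.mp hq ⟨0, -a, by linear_combination htz⟩ ht
  obtain ⟨Q, hQ, hqQ⟩ := Ideal.exists_le_maximal _ hne
  refine ⟨⟨Q, hQ.isPrime⟩, lt_of_le_of_ne (le_sup_left.trans hqQ) fun e => ?_⟩
  have hxQ : x ∈ Q := hqQ (Ideal.mem_sup_right (Ideal.mem_span_singleton_self x))
  exact Set.disjoint_left.mp hq (mem_krullBoundary_self x) (by rw [e]; exact hxQ)

lemma ringKrullDim_localization_krullBoundary_lt {n : ℕ} (hA : ringKrullDim A < n + 1) (x : A) :
    ringKrullDim (Localization (krullBoundary x)) < n := by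
  rw [ringKrullDim, Order.krullDim_eq_of_orderIso
    (IsLocalization.primeSpectrumOrderIso (krullBoundary x) _), Order.krullDim_lt_coe_iff]
  intro l
  obtain ⟨Q, hQ⟩ := exists_lt_of_disjoint_krullBoundary l.last.2
  have : l.length + 1 < n + 1 :=
    Order.krullDim_lt_coe_iff.mp hA ((l.map Subtype.val fun _ _ h => h).snoc Q hQ)
  omega

end KrullBoundary

lemma IsLocalization.exists_mul_mem_span_of_algebraMap_mem {A B ι : Type*} [CommRing A]
    [CommRing B] [Algebra A B] (M : Submonoid A) [IsLocalization M B] {a : A} {y : ι → A}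
    (h : algebraMap A B a ∈ Ideal.span (Set.range fun i => algebraMap A B (y i))) :
    ∃ s ∈ M, s * a ∈ Ideal.span (Set.range y) := by
  rw [← IsLocalization.algebraMap_mem_map_algebraMap_iff M (S := B), Ideal.map_span,
    ← Set.range_comp]
  exact h

theorem exists_pow_prod_mem_span_pow_succ_of_ringKrullDim_lt {A : Type*} [CommRing A] {n : ℕ}
    (hA : ringKrullDim A < n) (x : Fin n → A) :
    ∃ T, (∏ i, x i) ^ T ∈ Ideal.span (Set.range fun i => x i ^ (T + 1)) := by
  induction n generalizing A with
  | zero =>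
    have : Subsingleton A := not_nontrivial_iff_subsingleton.mp fun _ =>
      ringKrullDim_nonneg_of_nontrivial.not_gt (by exact_mod_cast hA)
    exact ⟨0, by rw [Subsingleton.elim ((∏ i, x i) ^ 0) 0]; exact zero_mem _⟩
  | succ n ih =>
    set y := x (Fin.last n)
    set P := ∏ i : Fin n, x i.castSucc
    obtain ⟨T, hT⟩ := ih (ringKrullDim_localization_krullBoundary_lt (by exact_mod_cast hA) y)
      fun i => algebraMap A (Localization (krullBoundary y)) (x i.castSucc)
    obtain ⟨_, ⟨m, a, rfl⟩, hs⟩ := IsLocalization.exists_mul_mem_span_of_algebraMap_mem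
      (krullBoundary y) (B := Localization (krullBoundary y)) (a := P ^ T)
      (y := fun i : Fin n => x i.castSucc ^ (T + 1))
      (by simpa only [P, map_pow, map_prod] using hT)
    set J := Ideal.span (Set.range fun i => x i ^ (T + m + 1))
    have hcolon : Ideal.span (Set.range fun i : Fin n => x i.castSucc ^ (T + 1)) ≤
        J.colon {P ^ m} := by
      refine Ideal.span_le.2 (Set.range_subset_iff.2 fun i => Submodule.mem_colon_singleton.2 ?_)
      obtain ⟨c, hc⟩ : x i.castSucc ^ (T + m + 1) ∣ x i.castSucc ^ (T + 1) * P ^ m := by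
        rw [show T + m + 1 = (T + 1) + m by ring, pow_add]
        exact mul_dvd_mul_left _ (pow_dvd_pow_of_dvd (Finset.dvd_prod_of_mem _ (by simp)) m)
      rw [smul_eq_mul, hc]
      exact J.mul_mem_right c (Ideal.subset_span ⟨i.castSucc, rfl⟩)
    have hrepr : (∏ i, x i) ^ (T + m) =
        y ^ T * (y ^ m * (1 + a * y) * P ^ T * P ^ m) - y ^ (T + m + 1) * (a * P ^ (T + m)) := by
      rw [Fin.prod_univ_castSucc]; ring
    refine ⟨T + m, hrepr ▸ J.sub_mem (J.mul_mem_left _ ?_) (J.mul_mem_right _ ?_)⟩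
    · simpa only [smul_eq_mul] using Submodule.mem_colon_singleton.1 (hcolon hs)
    · exact Ideal.subset_span ⟨Fin.last n, rfl⟩

lemma exists_mul_pow_prod_mem_span_pow_of_height_lt (p : PrimeSpectrum R) {n : ℕ}
    (hp : Order.height p < n) (x : Fin n → R) (k : ℕ) :
    ∃ s ∉ p.asIdeal, ∃ T, s * (∏ i, x i) ^ T ∈ Ideal.span (Set.range fun i => x i ^ (T + k)) := by
  have hdim : ringKrullDim (Localization.AtPrime p.asIdeal) < n := by
    rw [IsLocalization.AtPrime.ringKrullDim_eq_height p.asIdeal, p.height_eq_orderHeight]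
    exact_mod_cast hp
  obtain ⟨T, hT⟩ := exists_pow_prod_mem_span_pow_succ_of_ringKrullDim_lt hdim
    fun i => algebraMap R (Localization.AtPrime p.asIdeal) (x i ^ k)
  obtain ⟨s, hs, hsT⟩ := IsLocalization.exists_mul_mem_span_of_algebraMap_mem
    p.asIdeal.primeCompl (B := Localization.AtPrime p.asIdeal) (a := (∏ i, x i ^ k) ^ T)
    (y := fun i => (x i ^ k) ^ (T + 1)) (by simpa only [map_pow, map_prod] using hT)
  refine ⟨s, hs, k * T, ?_⟩
  simpa only [Finset.prod_pow, ← pow_mul, mul_add, mul_one] using hsT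

section Cech

variable {M : Type*} [AddCommGroup M] [Module R M]

lemma LocalizedModule.mk_sum {ι : Type*} {S : Submonoid R} (F : Finset ι) (f : ι → M) (s : S) :
    LocalizedModule.mk (∑ j ∈ F, f j) s = ∑ j ∈ F, LocalizedModule.mk (f j) s := by
  induction F using Finset.induction_on with
  | empty => exact LocalizedModule.zero_mk s
  | insert j F hj ih =>
    rw [Finset.sum_insert hj, Finset.sum_insert hj, ← ih]
    simp only [IsLocalizedModule.mk_eq_mk', IsLocalizedModule.mk'_add]

lemma LocalizedModule.exists_mk_pow_eq {a : R} (z : LocalizedModule (Submonoid.powers a) M) :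
    ∃ u k, LocalizedModule.mk u (Submonoid.pow a k) = z := by
  induction z using LocalizedModule.induction_on with
  | h u s =>
    obtain ⟨k, hk⟩ := s.2
    exact ⟨u, k, congrArg _ (Subtype.ext hk)⟩

lemma cechLoc_mk_pow (a b c : R) (hab : a ∣ b) (hb : b = a * c) (N : ℕ) (u : M) :
    cechLoc a b hab (LocalizedModule.mk u (Submonoid.pow a N)) =
      LocalizedModule.mk (c ^ N • u) (Submonoid.pow b N) := by
  subst hb
  rw [cechLoc, LocalizedModule.lift_mk, Module.End.algebraMap_isUnit_inv_apply_eq_iff,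
    LocalizedModule.mkLinearMap_apply, LocalizedModule.smul'_mk, smul_smul]
  change _ = LocalizedModule.mk ((a ^ N * c ^ N) • u) _
  rw [← mul_pow]
  exact (LocalizedModule.mk_cancel (Submonoid.pow (a * c) N) u).symm

-- The signs are those of `cechD` into the top degree, so they cancel in its coboundary.
def cechTopPreimage {m : ℕ} (x c : Fin (m + 1) → R) (N : ℕ) (u : M) : CechC x M m :=
  fun t => ∑ j ∈ t.1ᶜ, (-1 : ℤ) ^ (Finset.univ.filter (· < j)).card •
    LocalizedModule.mk (c j • u) (Submonoid.pow (∏ i ∈ t.1, x i) N)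

lemma cechD_cechTopPreimage {m : ℕ} (x c : Fin (m + 1) → R) (N : ℕ) (u : M) :
    cechD x M m (cechTopPreimage x c N u) ⟨Finset.univ, Finset.card_fin _⟩ =
      LocalizedModule.mk ((∑ j, x j ^ N * c j) • u) (Submonoid.pow (∏ k, x k) N) := by
  have hterm : ∀ j : Fin (m + 1), (-1 : ℤ) ^ (Finset.univ.filter (· < j)).card •
      cechLoc (∏ k ∈ Finset.univ.erase j, x k) (∏ k, x k)
        (Finset.prod_dvd_prod_of_subset _ _ _ (Finset.erase_subset _ _))
        (∑ i ∈ (Finset.univ.erase j)ᶜ, (-1 : ℤ) ^ (Finset.univ.filter (· < i)).card •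
          LocalizedModule.mk (c i • u) (Submonoid.pow (∏ k ∈ Finset.univ.erase j, x k) N)) =
      LocalizedModule.mk ((x j ^ N * c j) • u) (Submonoid.pow (∏ k, x k) N) := by
    intro j
    rw [Finset.compl_erase, Finset.compl_univ, insert_empty_eq, Finset.sum_singleton, map_zsmul,
      smul_smul, ← pow_add, Even.neg_one_pow (Even.add_self _), one_smul, cechLoc_mk_pow _ _ _ _
      (Finset.prod_erase_mul _ _ (Finset.mem_univ j)).symm, mul_smul]
  simp only [cechD, cechTopPreimage, LinearMap.coe_mk, AddHom.coe_mk]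
  rw [Finset.sum_congr rfl fun j _ => hterm j.1,
    Finset.sum_attach Finset.univ fun j => LocalizedModule.mk ((x j ^ N * c j) • u) _,
    ← LocalizedModule.mk_sum, Finset.sum_smul]

lemma exists_smul_mem_range_cechD_top (p : PrimeSpectrum R) {m : ℕ}
    (hp : Order.height p < (m + 1 : ℕ)) (x : Fin (m + 1) → R) (ξ : CechC x M (m + 1)) :
    ∃ s ∉ p.asIdeal, s • ξ ∈ LinearMap.range (cechD x M m) := by
  have htop : ∀ t : {t : Finset (Fin (m + 1)) // t.card = m + 1},
      t = ⟨Finset.univ, Finset.card_fin _⟩ :=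
    fun t => Subtype.ext (Finset.eq_univ_of_card _ (by rw [t.2, Fintype.card_fin]))
  obtain ⟨u, k, hξ⟩ := LocalizedModule.exists_mk_pow_eq (ξ ⟨Finset.univ, Finset.card_fin _⟩)
  obtain ⟨s, hs, T, hmem⟩ := exists_mul_pow_prod_mem_span_pow_of_height_lt p hp x k
  obtain ⟨c, hc⟩ := (Submodule.mem_span_range_iff_exists_fun R).mp hmem
  refine ⟨s, hs, cechTopPreimage x c (T + k) u, funext fun t => ?_⟩
  rw [htop t, cechD_cechTopPreimage, Pi.smul_apply, ← hξ, LocalizedModule.smul'_mk]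
  refine LocalizedModule.mk_eq.mpr ⟨1, ?_⟩
  have hsum : ∑ j, x j ^ (T + k) * c j = s * (∏ i, x i) ^ T := by
    simp only [← hc, smul_eq_mul, mul_comm]
  simp only [one_smul, Submonoid.smul_def, smul_smul, Submonoid.pow_apply, hsum]
  congr 1
  ring

theorem subsingleton_localizedModule_cechH_of_height_lt {n : ℕ} (x : Fin n → R)
    (p : PrimeSpectrum R) (hp : Order.height p < n) :
    Subsingleton (LocalizedModule p.asIdeal.primeCompl (CechH x M n)) := by
  obtain _ | m := n
  · simp at hp
  refine LocalizedModule.subsingleton_iff.mpr fun h => ?_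
  obtain ⟨ξ, rfl⟩ := Submodule.Quotient.mk_surjective _ h
  obtain ⟨s, hs, hmem⟩ := exists_smul_mem_range_cechD_top p hp x ξ.1
  exact ⟨s, hs, (Submodule.Quotient.mk_eq_zero _).mpr hmem⟩

end Cech

theorem stmt_10_general {R : Type*} [CommRing R]
    (l : List R) (hl : IsParamSeq l) :
    (l.length : ℕ∞) ≤ idealHeight (Ideal.span {a | a ∈ l}) := by
  refine le_iInf fun q => not_lt.mp fun hq => ?_
  exact not_subsingleton_iff_nontrivial.mpr (hl.2.2 q.1 q.2)
    (subsingleton_localizedModule_cechH_of_height_lt l.get q.1 hq)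

/-- If `R` has finitely many minimal primes and `x` is a parameter sequence on `R`, then
`ht((x)R) ≥ ℓ(x)`. -/
theorem stmt_10 {R : Type*} [CommRing R] (hmin : (minimalPrimes R).Finite)
    (l : List R) (hl : IsParamSeq l) :
    (l.length : ℕ∞) ≤ idealHeight (Ideal.span {a | a ∈ l}) :=
  stmt_10_general l hl

end
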